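/- Let T :⊆ X ⇉ Y and S :⊆ Y ⇉ Z be partial multivalued functions between represented spaces which are both cylinders, and suppose T is transparent. Then S ∘ T is a cylinder. -/

import Mathlib

open Filter Topology

/-! ### Partial functions on Baire space -/

/-- A partial function on Baire space, given by a domain and an underlying total
function (whose values outside the domain are irrelevant). -/
structure PFunB where
  dom : Set (ℕ → ℕ)
  toFun : (ℕ → ℕ) → (ℕ → ℕ)

/-- A partial function on Baire space is continuous if its underlying function is
continuous on its domain. -/
def PFunB.IsContinuous (F : PFunB) : Prop := ContinuousOn F.toFun F.dom

/-- Composition of partial functions on Baire space. -/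
def PFunB.comp (F G : PFunB) : PFunB where
  dom := {p | p ∈ G.dom ∧ G.toFun p ∈ F.dom}
  toFun := fun p => F.toFun (G.toFun p)

/-- A partial function from (Baire space) × (Baire space) to Baire space. -/
structure PFunB2 where
  dom : Set ((ℕ → ℕ) × (ℕ → ℕ))
  toFun : (ℕ → ℕ) × (ℕ → ℕ) → (ℕ → ℕ)

def PFunB2.IsContinuous (K : PFunB2) : Prop := ContinuousOn K.toFun K.dom

/-! ### Coding of sequences -/

/-- The `n`-th column of `p : ℕ → ℕ`, via the standard pairing bijection. -/
def col (p : ℕ → ℕ) (n : ℕ) : ℕ → ℕ := fun k => p (Nat.pair n k)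

/-- Interleaving pairing of two elements of Baire space. -/
def pairB (p q : ℕ → ℕ) : ℕ → ℕ := fun n => if n % 2 = 0 then p (n / 2) else q (n / 2)

def leftB (r : ℕ → ℕ) : ℕ → ℕ := fun n => r (2 * n)

def rightB (r : ℕ → ℕ) : ℕ → ℕ := fun n => r (2 * n + 1)

theorem leftB_pairB (p q : ℕ → ℕ) : leftB (pairB p q) = p := by
  funext n
  show (if (2 * n) % 2 = 0 then p ((2 * n) / 2) else q ((2 * n) / 2)) = p n
  rw [if_pos (by omega)]
  congr 1
  omega

theorem rightB_pairB (p q : ℕ → ℕ) : rightB (pairB p q) = q := by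
  funext n
  show (if (2 * n + 1) % 2 = 0 then p ((2 * n + 1) / 2) else q ((2 * n + 1) / 2)) = q n
  rw [if_neg (by omega)]
  congr 1
  omega

/-! ### Represented spaces -/

/-- A represented space: a set `X` together with a partial surjection from Baire space
onto `X` (modelled as a total map together with a domain, such that every point has a
name in the domain). -/
structure RepSpace (X : Type u) where
  dom : Set (ℕ → ℕ)
  map : (ℕ → ℕ) → X
  surj : ∀ x : X, ∃ p ∈ dom, map p = x

/-- Baire space with the identity representation. -/
def idRep : RepSpace (ℕ → ℕ) := ⟨Set.univ, id, fun x => ⟨x, trivial, rfl⟩⟩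

/-- The representation of `X`, viewed as a partial multivalued function from Baire
space to `X` (with empty value outside the domain). -/
def RepSpace.toMV {X : Type u} (δ : RepSpace X) : (ℕ → ℕ) → Set X :=
  fun p => {x | p ∈ δ.dom ∧ δ.map p = x}

/-- Product of represented spaces, via the interleaving pairing homeomorphism. -/
def RepSpace.prod {X : Type u} {Y : Type v} (δX : RepSpace X) (δY : RepSpace Y) :
    RepSpace (X × Y) where
  dom := {r | leftB r ∈ δX.dom ∧ rightB r ∈ δY.dom}
  map := fun r => (δX.map (leftB r), δY.map (rightB r))
  surj := by
    rintro ⟨x, y⟩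
    obtain ⟨p, hp, hpx⟩ := δX.surj x
    obtain ⟨q, hq, hqy⟩ := δY.surj y
    refine ⟨pairB p q, ⟨?_, ?_⟩, ?_⟩
    · rw [leftB_pairB]; exact hp
    · rw [rightB_pairB]; exact hq
    · show (δX.map (leftB (pairB p q)), δY.map (rightB (pairB p q))) = (x, y)
      rw [leftB_pairB, rightB_pairB, hpx, hqy]

/-- The represented space of sequences in `X`: `δ(p) = (δ_X((p)_n))_n`. -/
def RepSpace.seq {X : Type u} (δ : RepSpace X) : RepSpace (ℕ → X) where
  dom := {p | ∀ n, col p n ∈ δ.dom}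
  map := fun p n => δ.map (col p n)
  surj := by
    intro x
    choose q hq hmap using fun n => δ.surj (x n)
    have hcol : ∀ n, col (fun m => q (Nat.unpair m).1 (Nat.unpair m).2) n = q n := by
      intro n; funext k; simp [col]
    refine ⟨fun m => q (Nat.unpair m).1 (Nat.unpair m).2, fun n => ?_, ?_⟩
    · rw [hcol]; exact hq n
    · funext n
      show δ.map (col (fun m => q (Nat.unpair m).1 (Nat.unpair m).2) n) = x n
      rw [hcol]; exact hmap n

/-! ### Partial multivalued functions -/

/-- Composition of partial multivalued functions (with the domain convention
`dom (f ∘ g) = {x ∈ dom g : g x ⊆ dom f}`; a partial multivalued function is modelled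
as a `Set`-valued function whose domain is the set of points with nonempty value). -/
def MComp {X : Type u} {Y : Type v} {Z : Type w} (f : Y → Set Z) (g : X → Set Y) :
    X → Set Z :=
  fun x => {z | (∀ y ∈ g x, (f y).Nonempty) ∧ ∃ y ∈ g x, z ∈ f y}

/-- `f` tightens `g`: `dom g ⊆ dom f` and `f x ⊆ g x` for every `x ∈ dom g`. -/
def Tightens {X : Type u} {Y : Type v} (f g : X → Set Y) : Prop :=
  ∀ x, (g x).Nonempty → (f x).Nonempty ∧ f x ⊆ g x

/-- `F` is a realizer of the partial multivalued function `f`. -/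
def Realizes {X : Type u} {Y : Type v} (δX : RepSpace X) (δY : RepSpace Y)
    (F : PFunB) (f : X → Set Y) : Prop :=
  ∀ p ∈ δX.dom, (f (δX.map p)).Nonempty →
    p ∈ F.dom ∧ F.toFun p ∈ δY.dom ∧ δY.map (F.toFun p) ∈ f (δX.map p)

/-- A partial multivalued function between represented spaces is continuous if it has a
continuous realizer. -/
def MCts {X : Type u} {Y : Type v} (δX : RepSpace X) (δY : RepSpace Y)
    (f : X → Set Y) : Prop :=
  ∃ F : PFunB, F.IsContinuous ∧ Realizes δX δY F f

/-- Strong continuous Weihrauch reducibility `f ≤_sW^c g`. -/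
def StrongWc {A : Type u} {B : Type v} {C : Type w} {D : Type x}
    (δA : RepSpace A) (δB : RepSpace B) (δC : RepSpace C) (δD : RepSpace D)
    (f : A → Set B) (g : C → Set D) : Prop :=
  ∃ K H : PFunB, K.IsContinuous ∧ H.IsContinuous ∧
    ∀ G : PFunB, Realizes δC δD G g → Realizes δA δB (K.comp (G.comp H)) f

/-- Continuous Weihrauch reducibility `f ≤_W^c g`. -/
def Wc {A : Type u} {B : Type v} {C : Type w} {D : Type x}
    (δA : RepSpace A) (δB : RepSpace B) (δC : RepSpace C) (δD : RepSpace D)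
    (f : A → Set B) (g : C → Set D) : Prop :=
  ∃ (K : PFunB2) (H : PFunB), K.IsContinuous ∧ H.IsContinuous ∧
    ∀ G : PFunB, Realizes δC δD G g →
      Realizes δA δB
        ⟨{p | p ∈ H.dom ∧ H.toFun p ∈ G.dom ∧ (p, G.toFun (H.toFun p)) ∈ K.dom},
          fun p => K.toFun (p, G.toFun (H.toFun p))⟩ f

/-- Continuous Weihrauch equivalence `f ≡_W^c g`. -/
def WcEquiv {A : Type u} {B : Type v} {C : Type w} {D : Type x}
    (δA : RepSpace A) (δB : RepSpace B) (δC : RepSpace C) (δD : RepSpace D)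
    (f : A → Set B) (g : C → Set D) : Prop :=
  Wc δA δB δC δD f g ∧ Wc δC δD δA δB g f

/-- `id_{ℕ^ℕ} × g` for a partial multivalued `g`. -/
def idProd {C : Type u} {D : Type v} (g : C → Set D) :
    (ℕ → ℕ) × C → Set ((ℕ → ℕ) × D) :=
  fun pc => {qd | qd.1 = pc.1 ∧ qd.2 ∈ g pc.2}

/-- `f` is a cylinder if `id_{ℕ^ℕ} × f ≤_sW^c f`. -/
def IsCylinder {X : Type u} {Y : Type v} (δX : RepSpace X) (δY : RepSpace Y)
    (f : X → Set Y) : Prop :=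
  StrongWc (idRep.prod δX) (idRep.prod δY) δX δY (idProd f) f

/-- `T :⊆ X ⇉ Y` is transparent: for every continuous `g :⊆ Y ⇉ Y` there is a
continuous `f :⊆ X ⇉ X` with `T ∘ f ⪯ g ∘ T`. -/
def Transparent {X : Type u} {Y : Type v} (δX : RepSpace X) (δY : RepSpace Y)
    (T : X → Set Y) : Prop :=
  ∀ g : Y → Set Y, MCts δY δY g →
    ∃ f : X → Set X, MCts δX δX f ∧ Tightens (MComp T f) (MComp g T)

/-- `ζ :⊆ Y ⇉ ℕ^ℕ` is a probe for `Y`: it is continuous, and for every continuous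
`f :⊆ Y ⇉ ℕ^ℕ` there is a continuous `e :⊆ Y ⇉ Y` with `ζ ∘ e ⪯ f`. -/
def IsProbe {Y : Type u} (δY : RepSpace Y) (ζ : Y → Set (ℕ → ℕ)) : Prop :=
  MCts δY idRep ζ ∧
    ∀ f : Y → Set (ℕ → ℕ), MCts δY idRep f →
      ∃ e : Y → Set Y, MCts δY δY e ∧ Tightens (MComp ζ e) f

/-- Parallelization of a partial multivalued function. -/
def Parallel {X : Type u} {Y : Type v} (f : X → Set Y) : (ℕ → X) → Set (ℕ → Y) :=
  fun xs => {ys | ∀ n, ys n ∈ f (xs n)}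

/-! ### Games -/

/-- A strategy for player II: to each finite sequence of I's moves it assigns a natural
number or a pass (`none`). -/
abbrev Strategy := List ℕ → Option ℕ

/-- The move of player II (following `σ`) after I has played `x 0, …, x n`. -/
def respond (σ : Strategy) (x : ℕ → ℕ) (n : ℕ) : Option ℕ :=
  σ (List.ofFn fun i : Fin (n + 1) => x i)

/-- Player II plays natural numbers at infinitely many rounds of the run against `x`. -/
def InfPlays (σ : Strategy) (x : ℕ → ℕ) : Prop :=
  {n | (respond σ x n).isSome = true}.Infinite

/-- The element of Baire space built by player II in the run against `x`
(the subsequence of her non-pass moves). -/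
noncomputable def output (σ : Strategy) (x : ℕ → ℕ) : ℕ → ℕ :=
  fun k => (respond σ x (Nat.nth (fun n => (respond σ x n).isSome = true) k)).getD 0

/-- The partial multivalued function `δ_B ∘ ζ ∘ T ∘ δ_X :⊆ ℕ^ℕ ⇉ B` used in the winning
condition of the `(ζ, T)`-Wadge game. -/
def GameMap {X : Type u} {Y : Type v} {B : Type w} (δX : RepSpace X) (δB : RepSpace B)
    (ζ : Y → Set (ℕ → ℕ)) (T : X → Set Y) : (ℕ → ℕ) → Set B :=
  MComp δB.toMV (MComp ζ (MComp T δX.toMV))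

/-- `σ` is a winning strategy for player II in the `(ζ, T)`-Wadge game for `f`:
for every run `x` built by player I with `x ∈ dom (f ∘ δ_A)`, player II plays natural
numbers infinitely often, her output `y` lies in `dom (δ_B ∘ ζ ∘ T ∘ δ_X)`, and
`(δ_B ∘ ζ ∘ T ∘ δ_X)(y) ⊆ (f ∘ δ_A)(x)` (runs with `x ∉ dom (f ∘ δ_A)` are won by II
automatically). -/
def WadgeWinning {X : Type u} {Y : Type v} {A : Type w} {B : Type x}
    (δX : RepSpace X) (δA : RepSpace A) (δB : RepSpace B)
    (ζ : Y → Set (ℕ → ℕ)) (T : X → Set Y) (f : A → Set B) (σ : Strategy) : Prop :=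
  ∀ x : ℕ → ℕ, (MComp f δA.toMV x).Nonempty →
    InfPlays σ x ∧
    (GameMap δX δB ζ T (output σ x)).Nonempty ∧
    GameMap δX δB ζ T (output σ x) ⊆ MComp f δA.toMV x

/-! ### lim, isFinite and the Baire hierarchy -/

/-- The partial function `lim :⊆ ℕ^ℕ → ℕ^ℕ`, `lim(p) = lim_n (p)_n` (pointwise limit),
viewed as a partial multivalued function with singleton values on its domain. -/
def limFn : (ℕ → ℕ) → Set (ℕ → ℕ) :=
  fun p => {q | ∀ k, ∀ᶠ n in atTop, col p n k = q k}

/-- The space `{0,1}^ℕ` of binary sequences. -/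
abbrev BSeq : Type := {p : ℕ → ℕ // ∀ n, p n ≤ 1}

/-- `{0,1}^ℕ` with the identity representation (as a subspace of Baire space). -/
def repBSeq : RepSpace BSeq where
  dom := {p | ∀ n, p n ≤ 1}
  map := fun p => ⟨fun n => min (p n) 1, fun _ => min_le_right _ _⟩
  surj := fun x => ⟨x.1, x.2, Subtype.ext (funext fun n => min_eq_left (x.2 n))⟩

/-- The two-point space `{0,1}`. -/
abbrev TwoPt : Type := {n : ℕ // n ≤ 1}

/-- The two-point space `{0,1}` represented by `δ(p) = p 0`. -/
def repTwo : RepSpace TwoPt where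
  dom := {p | p 0 ≤ 1}
  map := fun p => ⟨min (p 0) 1, min_le_right _ _⟩
  surj := fun x => ⟨fun _ => x.1, x.2, Subtype.ext (min_eq_left x.2)⟩

open Classical in
/-- `isFinite(p) = 1` iff `{n : p n = 1}` is finite. -/
noncomputable def isFinite : BSeq → TwoPt :=
  fun p => if {n | p.1 n = 1}.Finite then ⟨1, le_refl 1⟩ else ⟨0, Nat.zero_le 1⟩

/-- The finite levels of the Baire hierarchy: Baire class 0 functions are the continuous
ones, and Baire class `n+1` functions are pointwise limits of sequences of Baire class
`n` functions. -/
def BaireClass : ℕ → ((ℕ → ℕ) → (ℕ → ℕ)) → Prop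
  | 0, f => Continuous f
  | n + 1, f => ∃ g : ℕ → (ℕ → ℕ) → (ℕ → ℕ),
      (∀ k, BaireClass n (g k)) ∧ ∀ x, Tendsto (fun k => g k x) atTop (𝓝 (f x))

/-!
Let `H_T, K_T` and `H_S, K_S` witness that `T` and `S` are cylinders. Because the
reductions must work for *every* realizer, `K_T` sends every name of every point of
`T (H_T ⟨p, x⟩)` to a name of some `⟨p, y⟩` with `y ∈ T x`, and likewise for `S`. The map
`Φ = H_S ∘ K_T` on `Y`-names is continuous, so transparency of `T` turns it into a continuous
`f` on `X` with `T ∘ f ⪯ Φ ∘ T`. Then `S ∘ T` is a cylinder via `H = F ∘ H_T` (for a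
realizer `F` of `f`) and `K = K_S`.
-/

namespace PFunB

variable {Y : Type*} {Z : Type*} (δY : RepSpace Y) (δZ : RepSpace Z)

def SendsInto (F : PFunB) (p : ℕ → ℕ) (B : Set Z) : Prop :=
  p ∈ F.dom ∧ F.toFun p ∈ δZ.dom ∧ δZ.map (F.toFun p) ∈ B

def MapsNames (F : PFunB) (A : Set Y) (B : Set Z) : Prop :=
  ∀ s ∈ δY.dom, δY.map s ∈ A → F.SendsInto δZ s B

/-- The multivalued map on points induced by `Φ`, defined where all names are sent to names. -/
def realized (Φ : PFunB) : Y → Set Z :=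
  fun y => {z | Φ.MapsNames δY δZ {y} Set.univ ∧
    ∃ s ∈ δY.dom, δY.map s = y ∧ δZ.map (Φ.toFun s) = z}

variable {δY δZ}

theorem IsContinuous.comp {F G : PFunB} (hF : F.IsContinuous) (hG : G.IsContinuous) :
    (F.comp G).IsContinuous :=
  ContinuousOn.comp (g := F.toFun) hF (hG.mono (t := (F.comp G).dom) fun _ hp => hp.1)
    fun _ hp => hp.2

theorem SendsInto.comp {W : Type*} {δW : RepSpace W} {F G : PFunB} {p : ℕ → ℕ}
    {B : Set Y} {C : Set W} (hG : G.SendsInto δY p B) (hF : F.MapsNames δY δW B C) :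
    (F.comp G).SendsInto δW p C :=
  let hFG := hF _ hG.2.1 hG.2.2
  ⟨⟨hG.1, hFG.1⟩, hFG.2⟩

theorem MapsNames.comp {W : Type*} {δW : RepSpace W} {F G : PFunB} {A : Set Y}
    {B : Set Z} {C : Set W} (hG : G.MapsNames δY δZ A B) (hF : F.MapsNames δZ δW B C) :
    (F.comp G).MapsNames δY δW A C :=
  fun s hs hsA => (hG s hs hsA).comp hF

theorem MapsNames.mono_right {F : PFunB} {A : Set Y} {B B' : Set Z}
    (hF : F.MapsNames δY δZ A B) (hB : B ⊆ B') : F.MapsNames δY δZ A B' :=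
  fun s hs hsA => let h := hF s hs hsA; ⟨h.1, h.2.1, hB h.2.2⟩

theorem realizes_realized (Φ : PFunB) : Realizes δY δZ Φ (Φ.realized δY δZ) := by
  rintro s hs ⟨z, hall, -⟩
  obtain ⟨hsΦ, hΦs, -⟩ := hall s hs rfl
  exact ⟨hsΦ, hΦs, hall, s, hs, rfl, rfl⟩

theorem MapsNames.realized_nonempty_subset {Φ : PFunB} {A : Set Y} {B : Set Z}
    (hΦ : Φ.MapsNames δY δZ A B) {y : Y} (hy : y ∈ A) :
    (Φ.realized δY δZ y).Nonempty ∧ Φ.realized δY δZ y ⊆ B := by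
  have hall : Φ.MapsNames δY δZ {y} Set.univ := by
    rintro s hs rfl
    obtain ⟨hsΦ, hΦs, -⟩ := hΦ s hs hy
    exact ⟨hsΦ, hΦs, trivial⟩
  obtain ⟨s, hs, rfl⟩ := δY.surj y
  refine ⟨⟨_, hall, s, hs, rfl, rfl⟩, ?_⟩
  rintro _ ⟨-, s', hs', hs's, rfl⟩
  exact (hΦ s' hs' (hs's ▸ hy)).2.2

end PFunB

section Reduction

variable {A B C D : Type*} {δA : RepSpace A} {δB : RepSpace B} {δC : RepSpace C}
  {δD : RepSpace D}

theorem exists_realizes_apply_eq (g : C → Set D) (q s : ℕ → ℕ) :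
    ∃ G : PFunB, Realizes δC δD G g ∧
      G.dom ⊆ {q' | q' ∈ δC.dom ∧ (g (δC.map q')).Nonempty} ∧
      (s ∈ δD.dom → δD.map s ∈ g (δC.map q) → G.toFun q = s) := by
  classical
  have hname : ∀ q', ∃ s', (g (δC.map q')).Nonempty →
      s' ∈ δD.dom ∧ δD.map s' ∈ g (δC.map q') := by
    intro q'
    by_cases hne : (g (δC.map q')).Nonempty
    · obtain ⟨s', hs', hs'y⟩ := δD.surj hne.some
      exact ⟨s', fun _ => ⟨hs', hs'y ▸ hne.some_mem⟩⟩
    · exact ⟨q', fun h => absurd h hne⟩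
  choose base hbase using hname
  let prescribed : (ℕ → ℕ) → Prop := fun q' =>
    q' = q ∧ s ∈ δD.dom ∧ δD.map s ∈ g (δC.map q')
  refine ⟨⟨{q' | q' ∈ δC.dom ∧ (g (δC.map q')).Nonempty},
      fun q' => if prescribed q' then s else base q'⟩,
    ?_, subset_rfl, fun hs hsq => if_pos ⟨rfl, hs, hsq⟩⟩
  intro q' hq' hne
  refine ⟨⟨hq', hne⟩, ?_⟩
  by_cases hq : prescribed q'
  · simp only [if_pos hq]
    exact hq.2
  · simp only [if_neg hq]
    exact hbase q' hne

/-- The reduction must work in particular for realizers answering `H r` with an arbitrary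
solution name. -/
theorem sendsInto_and_mapsNames_of_reduction {f : A → Set B} {g : C → Set D} {K H : PFunB}
    (hKH : ∀ G : PFunB, Realizes δC δD G g → Realizes δA δB (K.comp (G.comp H)) f)
    {r : ℕ → ℕ} (hr : r ∈ δA.dom) (hf : (f (δA.map r)).Nonempty) :
    H.SendsInto δC r {c | (g c).Nonempty} ∧
      K.MapsNames δD δB (g (δC.map (H.toFun r))) (f (δA.map r)) := by
  obtain ⟨G₀, hG₀, hG₀dom, -⟩ := exists_realizes_apply_eq g r r (δC := δC) (δD := δD)
  obtain ⟨⟨hrH, hHG₀⟩, -⟩ := (hKH G₀ hG₀ r hr hf).1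
  refine ⟨⟨hrH, (hG₀dom hHG₀).1, (hG₀dom hHG₀).2⟩, fun s hs hsg => ?_⟩
  obtain ⟨G, hG, -, hGs⟩ := exists_realizes_apply_eq g (H.toFun r) s (δC := δC) (δD := δD)
  obtain ⟨⟨-, hsK⟩, hKs, hKsf⟩ := hKH G hG r hr hf
  simp only [PFunB.comp, hGs hs hsg] at hsK hKs hKsf
  exact ⟨hsK, hKs, hKsf⟩

end Reduction

section Composition

variable {X Y Z : Type*}

theorem mcomp_nonempty {f : Y → Set Z} {g : X → Set Y} {x : X} (hg : (g x).Nonempty)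
    (hf : ∀ y ∈ g x, (f y).Nonempty) : (MComp f g x).Nonempty :=
  let ⟨y, hy⟩ := hg
  let ⟨z, hz⟩ := hf y hy
  ⟨z, hf, y, hy, hz⟩

theorem mcomp_subset {f : Y → Set Z} {g : X → Set Y} {x : X} {B : Set Z}
    (hf : ∀ y ∈ g x, f y ⊆ B) : MComp f g x ⊆ B := by
  rintro z ⟨-, y, hy, hz⟩
  exact hf y hy hz

theorem idProd_subset_idProd_mcomp {S : Y → Set Z} {T : X → Set Y} {a : (ℕ → ℕ) × X}
    {b : (ℕ → ℕ) × Y} (hb : b ∈ idProd T a) (hTS : ∀ y ∈ T a.2, (S y).Nonempty) :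
    idProd S b ⊆ idProd (MComp S T) a := by
  rintro c ⟨hc₁, hc₂⟩
  exact ⟨hc₁.trans hb.1, hTS, b.2, hb.2, hc₂⟩

end Composition

/-- If `T :⊆ X ⇉ Y` and `S :⊆ Y ⇉ Z` are cylinders and `T` is transparent, then
`S ∘ T` is a cylinder. -/
theorem comp_cylinder {X Y Z : Type*}
    (δX : RepSpace X) (δY : RepSpace Y) (δZ : RepSpace Z)
    (T : X → Set Y) (S : Y → Set Z)
    (hT : IsCylinder δX δY T) (hS : IsCylinder δY δZ S)
    (htr : Transparent δX δY T) :
    IsCylinder δX δZ (MComp S T) := by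
  obtain ⟨KT, HT, hKT, hHT, hTred⟩ := hT
  obtain ⟨KS, HS, hKS, hHS, hSred⟩ := hS
  obtain ⟨f, ⟨F, hF, hFf⟩, htight⟩ :=
    htr _ ⟨_, hHS.comp hKT, PFunB.realizes_realized (HS.comp KT)⟩
  refine ⟨KS, F.comp HT, hKS, hF.comp hHT, fun G hG r hr hne => ?_⟩
  set a := (idRep.prod δX).map r
  obtain ⟨_, -, hTS, y, hy, -⟩ := hne
  obtain ⟨hr₁, hKT_dec⟩ :=
    sendsInto_and_mapsNames_of_reduction hTred hr ⟨(a.1, y), rfl, hy⟩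
  set x₁ := δX.map (HT.toFun r)
  let good : Set Y :=
    {y | (S y).Nonempty ∧ KS.MapsNames δZ (idRep.prod δZ) (S y) (idProd (MComp S T) a)}
  have hΦ : (HS.comp KT).MapsNames δY δY (T x₁) good := by
    refine hKT_dec.comp fun u hu hua => ?_
    obtain ⟨z, hz⟩ := hTS _ hua.2
    obtain ⟨hu₁, hKS_dec⟩ :=
      sendsInto_and_mapsNames_of_reduction hSred hu ⟨(_, z), rfl, hz⟩
    exact ⟨hu₁.1, hu₁.2.1, hu₁.2.2,
      hKS_dec.mono_right (idProd_subset_idProd_mcomp hua hTS)⟩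
  obtain ⟨hTf, hTf_good⟩ := htight x₁ <| mcomp_nonempty hr₁.2.2 fun y hy =>
    (hΦ.realized_nonempty_subset hy).1
  obtain ⟨_, hfT, x', hx', -⟩ := hTf
  have hF₁ := hFf _ hr₁.2.1 ⟨x', hx'⟩
  have hgood : T (δX.map (F.toFun (HT.toFun r))) ⊆ good := fun y' hy' =>
    mcomp_subset (fun y hy => (hΦ.realized_nonempty_subset hy).2)
      (hTf_good ⟨hfT, _, hF₁.2.2, hy'⟩)
  obtain ⟨hG₁, hGd, -, y', hy', hz'⟩ :=
    hG _ hF₁.2.1 (mcomp_nonempty (hfT _ hF₁.2.2) fun y' hy' => (hgood hy').1)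
  obtain ⟨hK₁, hK₂, hK₃⟩ := (hgood hy').2 _ hGd hz'
  exact ⟨⟨⟨⟨hr₁.1, hF₁.1⟩, hG₁⟩, hK₁⟩, hK₂, hK₃⟩
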